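/- arXiv:1610.08903 — 2 statements merged into one kernel-verified Lean document; each statement's English description precedes it below -/
import Mathlib

section
/- Consider the softmax map on R^{K+1}: for utilities u ∈ R^{K+1}, define σ_k(u) = exp(u_k)/Σ_{q=0}^K exp(u_q). Suppose u_k(t) = β_k + Σ_{ℓ=0}^K α_{kℓ} t_ℓ for t in the simplex Δ^K, with α_{0ℓ} = 0 for all ℓ. Let λ = (K/(K+1)) · max_{k,m,ℓ} |α_{kℓ} − α_{mℓ}|. Then the best-response map BR: Δ^K → Δ^K defined by BR(t) = σ(u(t)) is Lipschitz in the L^1 norm with constant λ: ||BR(t) − BR(t')||_1 ≤ λ ||t − t'||_1 for all t, t' ∈ Δ^K. -/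
/-!
Write `t = t' + d`. Then `u t = u t' + c` with `c k = ∑ ℓ, α k ℓ * d ℓ`, and the spread
`|c k - c m|` is at most `M * ‖d‖₁`, `M` the maximum in `λ`. Along the segment
`s ↦ σ (u t' + s • c)` the softmax `p = σ (…)` moves with velocity `p k * (c k - 𝔼_p c)`, whose
`L¹` norm is at most `∑ k, p k * ∑ q ≠ k, p q * |c k - c q| ≤ (1 - ∑ k, p k ^ 2) * M * ‖d‖₁`.
By Cauchy–Schwarz, `∑ k, p k ^ 2 ≥ 1 / (K + 1)`, which produces the factor `K / (K + 1)`.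
-/

open Finset Real

noncomputable def softmax {ι : Type*} [Fintype ι] (x : ι → ℝ) (k : ι) : ℝ :=
  exp (x k) / ∑ q, exp (x q)

section ProbabilityVector

variable {ι : Type*} [Fintype ι] {p : ι → ℝ}

lemma abs_sub_sum_mul_le (hp0 : ∀ k, 0 ≤ p k) (hp1 : ∑ q, p q = 1) (c : ι → ℝ) (k : ι) :
    |c k - ∑ q, p q * c q| ≤ ∑ q, p q * |c k - c q| := by
  have hmean : c k - ∑ q, p q * c q = ∑ q, p q * (c k - c q) := by
    simp only [mul_sub, sum_sub_distrib, ← sum_mul, hp1, one_mul]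
  rw [hmean]
  refine (abs_sum_le_sum_abs _ _).trans_eq (sum_congr rfl fun q _ => ?_)
  rw [abs_mul, abs_of_nonneg (hp0 q)]

lemma sum_mul_abs_sub_le (hp0 : ∀ k, 0 ≤ p k) (hp1 : ∑ q, p q = 1) {c : ι → ℝ} {B : ℝ} {k : ι}
    (hc : ∀ q, |c k - c q| ≤ B) : ∑ q, p q * |c k - c q| ≤ B * (1 - p k) := by
  classical
  rw [← add_sum_erase _ _ (mem_univ k), sub_self, abs_zero, mul_zero, zero_add]
  calc ∑ q ∈ univ.erase k, p q * |c k - c q| ≤ ∑ q ∈ univ.erase k, p q * B :=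
        sum_le_sum fun q _ => mul_le_mul_of_nonneg_left (hc q) (hp0 q)
    _ = B * (1 - p k) := by rw [← sum_mul, sum_erase_eq_sub (mem_univ k), hp1, mul_comm]

lemma one_div_card_le_sum_sq (hp1 : ∑ q, p q = 1) : 1 / (Fintype.card ι : ℝ) ≤ ∑ q, p q ^ 2 := by
  refine div_le_of_le_mul₀ (Nat.cast_nonneg _) (sum_nonneg fun _ _ => sq_nonneg _) ?_
  simpa [hp1, mul_comm] using sq_sum_le_card_mul_sum_sq (s := univ) (f := p)

lemma sum_mul_abs_sub_sum_mul_le (hp0 : ∀ k, 0 ≤ p k) (hp1 : ∑ q, p q = 1) {c : ι → ℝ} {B : ℝ}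
    (hc : ∀ k q, |c k - c q| ≤ B) :
    ∑ k, p k * |c k - ∑ q, p q * c q| ≤ (1 - 1 / (Fintype.card ι : ℝ)) * B := by
  obtain ⟨k₀, -⟩ := nonempty_of_sum_ne_zero (hp1.trans_ne one_ne_zero)
  have hB : 0 ≤ B := (abs_nonneg _).trans (hc k₀ k₀)
  calc ∑ k, p k * |c k - ∑ q, p q * c q| ≤ ∑ k, p k * (B * (1 - p k)) :=
        sum_le_sum fun k _ => mul_le_mul_of_nonneg_left
          ((abs_sub_sum_mul_le hp0 hp1 c k).trans (sum_mul_abs_sub_le hp0 hp1 (hc k))) (hp0 k)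
    _ = ∑ k, (p k * B - p k ^ 2 * B) := sum_congr rfl fun k _ => by ring
    _ = (1 - ∑ k, p k ^ 2) * B := by rw [sum_sub_distrib, ← sum_mul, ← sum_mul, hp1, sub_mul]
    _ ≤ (1 - 1 / (Fintype.card ι : ℝ)) * B := by
        gcongr
        exact one_div_card_le_sum_sq hp1

end ProbabilityVector

section Softmax

variable {ι : Type*} [Fintype ι]

lemma softmax_nonneg (x : ι → ℝ) (k : ι) : 0 ≤ softmax x k :=
  div_nonneg (exp_pos _).le (sum_nonneg fun _ _ => (exp_pos _).le)

lemma sum_softmax [Nonempty ι] (x : ι → ℝ) : ∑ k, softmax x k = 1 := by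
  simp only [softmax, ← sum_div]
  exact div_self (sum_pos (fun q _ => exp_pos _) univ_nonempty).ne'

lemma hasDerivAt_softmax_add_smul [Nonempty ι] (y c : ι → ℝ) (k : ι) (s : ℝ) :
    HasDerivAt (fun s : ℝ => softmax (y + s • c) k)
      (softmax (y + s • c) k * (c k - ∑ q, softmax (y + s • c) q * c q)) s := by
  have hexp : ∀ q, HasDerivAt (fun s : ℝ => exp (y q + s * c q)) (exp (y q + s * c q) * c q) s :=
    fun q => (((hasDerivAt_id s).mul_const (c q)).const_add (y q)).exp.congr_deriv (by simp)
  have hZ : 0 < ∑ q, exp (y q + s * c q) := sum_pos (fun q _ => exp_pos _) univ_nonempty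
  simp only [softmax, Pi.add_apply, Pi.smul_apply, smul_eq_mul]
  refine ((hexp k).fun_div (HasDerivAt.fun_sum fun q _ => hexp q) hZ.ne').congr_deriv ?_
  simp only [div_mul_eq_mul_div, ← sum_div]
  field_simp

theorem sum_abs_softmax_add_sub_softmax_le [Nonempty ι] (y c : ι → ℝ) {B : ℝ}
    (hc : ∀ k m, |c k - c m| ≤ B) :
    ∑ k, |softmax (y + c) k - softmax y k| ≤ (1 - 1 / (Fintype.card ι : ℝ)) * B := by
  -- Pairing with the sign pattern of the endpoint difference reduces the `L¹` bound to the
  -- scalar mean value inequality.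
  set w : ι → ℝ := fun k => SignType.sign (softmax (y + c) k - softmax y k)
  have hw : ∀ k, |w k| ≤ 1 := fun k => by
    rcases lt_trichotomy (softmax (y + c) k - softmax y k) 0 with h | h | h <;> simp [w, h]
  set g : ℝ → ℝ := fun s => ∑ k, w k * softmax (y + s • c) k
  have hg : ∀ s, HasDerivAt g
      (∑ k, w k * (softmax (y + s • c) k * (c k - ∑ q, softmax (y + s • c) q * c q))) s :=
    fun s => HasDerivAt.fun_sum fun k _ => (hasDerivAt_softmax_add_smul y c k s).const_mul (w k)
  have hg' : ∀ s : ℝ, ‖∑ k, w k * (softmax (y + s • c) k * (c k - ∑ q, softmax (y + s • c) q * c q))‖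
      ≤ (1 - 1 / (Fintype.card ι : ℝ)) * B := fun s => by
    rw [Real.norm_eq_abs]
    refine (abs_sum_le_sum_abs _ _).trans ((sum_le_sum fun k _ => ?_).trans
      (sum_mul_abs_sub_sum_mul_le (softmax_nonneg (y + s • c)) (sum_softmax (y + s • c)) hc))
    rw [abs_mul, abs_mul, abs_of_nonneg (softmax_nonneg _ k)]
    exact mul_le_of_le_one_left (mul_nonneg (softmax_nonneg _ k) (abs_nonneg _)) (hw k)
  have hg01 : g 1 - g 0 = ∑ k, |softmax (y + c) k - softmax y k| := by
    simp only [g, one_smul, zero_smul, add_zero, ← sum_sub_distrib, ← mul_sub, w, sign_mul_self]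
  rw [← hg01]
  exact (le_abs_self _).trans
    (norm_image_sub_le_of_norm_deriv_le_segment_01' (fun s _ => (hg s).hasDerivWithinAt)
      fun s _ => hg' s)

end Softmax

lemma abs_sum_mul_sub_sum_mul_le {ι : Type*} [Fintype ι] {a b : ι → ℝ} {M : ℝ}
    (h : ∀ ℓ, |a ℓ - b ℓ| ≤ M) (d : ι → ℝ) :
    |∑ ℓ, a ℓ * d ℓ - ∑ ℓ, b ℓ * d ℓ| ≤ M * ∑ ℓ, |d ℓ| := by
  rw [← sum_sub_distrib, mul_sum]
  refine (abs_sum_le_sum_abs _ _).trans (sum_le_sum fun ℓ _ => ?_)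
  rw [← sub_mul, abs_mul]
  exact mul_le_mul_of_nonneg_right (h ℓ) (abs_nonneg _)

theorem softmax_lipschitz_general (K : ℕ)
    (β : Fin (K + 1) → ℝ) (α : Fin (K + 1) → Fin (K + 1) → ℝ)
    (u : (Fin (K + 1) → ℝ) → Fin (K + 1) → ℝ)
    (hu : ∀ t k, u t k = β k + ∑ ℓ, α k ℓ * t ℓ)
    (BR : (Fin (K + 1) → ℝ) → Fin (K + 1) → ℝ)
    (hBR : ∀ t k, BR t k = Real.exp (u t k) / ∑ q : Fin (K + 1), Real.exp (u t q))
    (lam : ℝ)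
    (hlam : lam = (K : ℝ) / (K + 1) *
      Finset.univ.sup' Finset.univ_nonempty
        (fun p : Fin (K + 1) × Fin (K + 1) × Fin (K + 1) => |α p.1 p.2.2 - α p.2.1 p.2.2|))
    (t t' : Fin (K + 1) → ℝ) :
    ∑ k, |BR t k - BR t' k| ≤ lam * ∑ ℓ, |t ℓ - t' ℓ| := by
  set M := univ.sup' univ_nonempty
    (fun p : Fin (K + 1) × Fin (K + 1) × Fin (K + 1) => |α p.1 p.2.2 - α p.2.1 p.2.2|)
  set c : Fin (K + 1) → ℝ := fun k => ∑ ℓ, α k ℓ * (t ℓ - t' ℓ)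
  have hBR_eq : ∀ t, BR t = softmax (u t) := fun t => funext (hBR t)
  have hut : u t = u t' + c := funext fun k => by
    simp only [hu, c, Pi.add_apply, mul_sub, sum_sub_distrib]
    ring
  have hc : ∀ k m, |c k - c m| ≤ M * ∑ ℓ, |t ℓ - t' ℓ| := fun k m =>
    abs_sum_mul_sub_sum_mul_le (fun ℓ => le_sup' (fun p => |α p.1 p.2.2 - α p.2.1 p.2.2|)
      (mem_univ (k, m, ℓ))) _
  calc ∑ k, |BR t k - BR t' k| = ∑ k, |softmax (u t' + c) k - softmax (u t') k| := by
        rw [hBR_eq, hBR_eq, hut]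
    _ ≤ (1 - 1 / (K + 1 : ℝ)) * (M * ∑ ℓ, |t ℓ - t' ℓ|) := by
        simpa only [Fintype.card_fin, Nat.cast_add, Nat.cast_one] using
          sum_abs_softmax_add_sub_softmax_le (u t') c hc
    _ = lam * ∑ ℓ, |t ℓ - t' ℓ| := by
        rw [hlam]
        field_simp
        ring

/-- The softmax best-response map with linear-in-probabilities payoffs is
Lipschitz in the L¹ norm on the simplex with constant
λ = (K/(K+1)) · max_{k,m,ℓ} |α_{kℓ} − α_{mℓ}|. -/
theorem softmax_lipschitz (K : ℕ)
    (β : Fin (K + 1) → ℝ) (α : Fin (K + 1) → Fin (K + 1) → ℝ)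
    (hα0 : ∀ ℓ, α 0 ℓ = 0)
    (u : (Fin (K + 1) → ℝ) → Fin (K + 1) → ℝ)
    (hu : ∀ t k, u t k = β k + ∑ ℓ, α k ℓ * t ℓ)
    (BR : (Fin (K + 1) → ℝ) → Fin (K + 1) → ℝ)
    (hBR : ∀ t k, BR t k = Real.exp (u t k) / ∑ q : Fin (K + 1), Real.exp (u t q))
    (lam : ℝ)
    (hlam : lam = (K : ℝ) / (K + 1) *
      Finset.univ.sup' Finset.univ_nonempty
        (fun p : Fin (K + 1) × Fin (K + 1) × Fin (K + 1) => |α p.1 p.2.2 - α p.2.1 p.2.2|))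
    (t t' : Fin (K + 1) → ℝ)
    (ht : (∀ k, 0 ≤ t k) ∧ ∑ k, t k = 1)
    (ht' : (∀ k, 0 ≤ t' k) ∧ ∑ k, t' k = 1) :
    ∑ k, |BR t k - BR t' k| ≤ lam * ∑ ℓ, |t ℓ - t' ℓ| :=
  softmax_lipschitz_general K β α u hu BR hBR lam hlam t t'
end

section
/- Network decaying dependence: Let N = {1,...,n} with friendship sets F_i, and define N_{(i,0)} = {i}, N_{(i,h)} = N_{(i,h−1)} ∪ (∪_{j ∈ N_{(i,h−1)}} F_j). Suppose σ* and σ† are two solutions of the fixed-point systems σ_i = Γ_i(s, {σ_j : j ∈ F_i}) and σ_i = Γ'_i(s', {σ_j : j ∈ F_i}) respectively, where each Γ_i (resp. Γ'_i) maps into Δ^K, is λ-quasi-Lipschitz in its friend arguments with λ < 1, and Γ_j = Γ'_j for all j ∈ N_{(i,h)} (the two systems agree on the h-neighborhood of i). Then ||σ*_i − σ†_i||_1 ≤ 2λ^{h+1}. -/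
/-- Network decaying dependence: if two λ-quasi-Lipschitz fixed-point systems agree on the
h-neighborhood of player i, then the equilibrium choice probabilities of player i in the two
systems differ by at most 2λ^{h+1} in L¹ norm. -/
theorem network_decaying_dependence (n K : ℕ) (hn : 1 ≤ n)
    (F : Fin n → Finset (Fin n)) (hF : ∀ i, i ∉ F i)
    (i : Fin n) (h : ℕ)
    (Nbd : ℕ → Finset (Fin n))
    (hN0 : Nbd 0 = {i})
    (hNs : ∀ m, Nbd (m + 1) = Nbd m ∪ (Nbd m).biUnion F)
    (Γ Γ' : Fin n → (Fin n → Fin (K + 1) → ℝ) → Fin (K + 1) → ℝ)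
    (lam : ℝ) (hlam0 : 0 ≤ lam) (hlam1 : lam < 1)
    (hLip : ∀ j (σ σ' : Fin n → Fin (K + 1) → ℝ) (b : ℝ), 0 ≤ b →
      (∀ j' ∈ F j, ∑ k, |σ j' k - σ' j' k| ≤ b) →
      ∑ k, |Γ j σ k - Γ j σ' k| ≤ lam * b)
    (hLip' : ∀ j (σ σ' : Fin n → Fin (K + 1) → ℝ) (b : ℝ), 0 ≤ b →
      (∀ j' ∈ F j, ∑ k, |σ j' k - σ' j' k| ≤ b) →
      ∑ k, |Γ' j σ k - Γ' j σ' k| ≤ lam * b)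
    (hagree : ∀ j ∈ Nbd h, Γ j = Γ' j)
    (σs σd : Fin n → Fin (K + 1) → ℝ)
    (hσs : ∀ j, (∀ k, 0 ≤ σs j k) ∧ ∑ k, σs j k = 1)
    (hσd : ∀ j, (∀ k, 0 ≤ σd j k) ∧ ∑ k, σd j k = 1)
    (hfixs : ∀ j, σs j = Γ j σs)
    (hfixd : ∀ j, σd j = Γ' j σd) :
    ∑ k, |σs i k - σd i k| ≤ 2 * lam ^ (h + 1) := by

  -- distance between any two distributions is at most 2
  have hdist2 : ∀ j : Fin n, ∑ k, |σs j k - σd j k| ≤ 2 := by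
    intro j
    calc ∑ k, |σs j k - σd j k| ≤ ∑ k, (σs j k + σd j k) := by
          apply Finset.sum_le_sum
          intro k _
          calc |σs j k - σd j k| ≤ |σs j k| + |σd j k| := abs_sub _ _
            _ = σs j k + σd j k := by
                rw [abs_of_nonneg ((hσs j).1 k), abs_of_nonneg ((hσd j).1 k)]
      _ = 2 := by rw [Finset.sum_add_distrib, (hσs j).2, (hσd j).2]; norm_num
  -- monotonicity of neighborhoods
  have hmono : ∀ a b : ℕ, a ≤ b → Nbd a ⊆ Nbd b := by
    intro a b hab
    induction b with
    | zero => simpa [Nat.le_zero.mp hab]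
    | succ b ih =>
      rcases Nat.lt_or_ge a (b+1) with hlt | hge
      · exact (ih (Nat.lt_succ_iff.mp hlt)).trans (by rw [hNs]; exact Finset.subset_union_left)
      · have : a = b + 1 := le_antisymm hab hge
        simp [this]
  have key : ∀ q : ℕ, q ≤ h → ∀ j ∈ Nbd (h - q),
      ∑ k, |σs j k - σd j k| ≤ 2 * lam ^ (q + 1) := by
    intro q
    induction q with
    | zero =>
      intro _ j hj
      have hag := hagree j (by simpa using hj)
      rw [hfixs j, hfixd j, ← hag]
      have := hLip j σs σd 2 (by norm_num) (fun j' _ => hdist2 j')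
      calc ∑ k, |Γ j σs k - Γ j σd k| ≤ lam * 2 := this
        _ = 2 * lam ^ (0 + 1) := by ring
    | succ q ih =>
      intro hq j hj
      have hq' : q ≤ h := Nat.le_of_succ_le hq
      have hstep : Nbd (h - (q + 1) + 1) = Nbd (h - q) := by
        congr 1
        omega
      have hjq : j ∈ Nbd (h - q) := by
        rw [← hstep]
        exact hmono _ _ (Nat.le_succ _) hj
      have hag := hagree j (hmono _ _ (Nat.sub_le h q) hjq)
      have hfr : ∀ j' ∈ F j, j' ∈ Nbd (h - q) := by
        intro j' hj'
        rw [← hstep, hNs]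
        exact Finset.mem_union_right _ (Finset.mem_biUnion.mpr ⟨j, hj, hj'⟩)
      rw [hfixs j, hfixd j, ← hag]
      have hb : (0:ℝ) ≤ 2 * lam ^ (q + 1) := by positivity
      have := hLip j σs σd (2 * lam ^ (q + 1)) hb
        (fun j' hj' => ih hq' j' (hfr j' hj'))
      calc ∑ k, |Γ j σs k - Γ j σd k| ≤ lam * (2 * lam ^ (q + 1)) := this
        _ = 2 * lam ^ (q + 1 + 1) := by ring
  have := key h le_rfl i (by simp [hN0])
  simpa using this
end
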